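/- Let F = (A, C) be a finite AAF and l a labelling such that every argument labelled out has an attacker labelled in. Suppose g is a preference function over F such that l is a complete labelling of the fPSG (A, g⁻¹(1)). Define g_f : C → {0,1} by g_f((u,v)) = g((u,v)) if l(u) ≠ out and l(v) ≠ out, and otherwise g_f((u,v)) = 1 if l(v) = out and g_f((u,v)) = 0 if l(v) ≠ out. Then g_f is a preference function over F and l is a complete labelling of the fPSG (A, g_f⁻¹(1)). -/
import Mathlib


/-- The three labels of a labelling: `inn` (in), `out`, `undec`. -/
inductive Label where
  | inn : Label
  | out : Label
  | undec : Label
deriving DecidableEq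

/-- Undirected connectivity: reachability in the symmetric closure of `C`.
`Conn C a b` holds iff `a` and `b` are joined by an undirected path, i.e.
they lie in the same connected component of `(A, C)`. -/
def Conn {A : Type*} (C : A → A → Prop) : A → A → Prop :=
  Relation.ReflTransGen (fun x y => C x y ∨ C y x)

/-- A CC-wise total order on the AAF `(A, C)`: a reflexive transitive relation
whose restriction to each connected component is total. -/
structure CCOrder {A : Type*} (C : A → A → Prop) where
  le : A → A → Prop
  refl : ∀ a, le a a
  trans : ∀ a b c, le a b → le b c → le a c
  total : ∀ a b, Conn C a b → le a b ∨ le b a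

/-- Strict part: `a ≺ b` iff `a ≼ b` and not `b ≼ a`. -/
def CCOrder.lt {A : Type*} {C : A → A → Prop} (r : CCOrder C) (a b : A) : Prop :=
  r.le a b ∧ ¬ r.le b a

/-- Reduction 1: `C₁ = {(a,b) | ((a,b) ∈ C ∧ b ≼ a) ∨ ((b,a) ∈ C ∧ b ≺ a)}`. -/
def red1 {A : Type*} (C : A → A → Prop) (r : CCOrder C) (a b : A) : Prop :=
  (C a b ∧ r.le b a) ∨ (C b a ∧ r.lt b a)

/-- Reduction 2: `C₂ = {(a,b) ∈ C | b ≼ a ∨ (b,a) ∉ C}`. -/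
def red2 {A : Type*} (C : A → A → Prop) (r : CCOrder C) (a b : A) : Prop :=
  C a b ∧ (r.le b a ∨ ¬ C b a)

/-- Reduction 3: `C₁ ∪ C₂`. -/
def red3 {A : Type*} (C : A → A → Prop) (r : CCOrder C) (a b : A) : Prop :=
  red1 C r a b ∨ red2 C r a b

/-- Reduction 4: `C₄ = {(a,b) ∈ C | b ≼ a}`. -/
def red4 {A : Type*} (C : A → A → Prop) (r : CCOrder C) (a b : A) : Prop :=
  C a b ∧ r.le b a

/-- `l` is a complete labelling of the attack relation `C`:
`l a = in` iff all attackers of `a` are `out`, and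
`l a = out` iff some attacker of `a` is `in` (and `undec` otherwise,
which is automatic for a three-valued labelling). -/
def CompleteLabelling {A : Type*} (C : A → A → Prop) (l : A → Label) : Prop :=
  ∀ a, (l a = Label.inn ↔ ∀ b, C b a → l b = Label.out) ∧
       (l a = Label.out ↔ ∃ b, C b a ∧ l b = Label.inn)

/-- `(a,b) ∈ F₁`: an attack of `C` assigned value 1 by `f`. -/
def inF1 {A : Type*} (C : A → A → Prop) (f : A → A → Bool) (a b : A) : Prop :=
  C a b ∧ f a b = true

/-- `(a,b) ∈ F₀`: an attack of `C` assigned value 0 by `f`. -/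
def inF0 {A : Type*} (C : A → A → Prop) (f : A → A → Bool) (a b : A) : Prop :=
  C a b ∧ f a b = false

/-- The relation `conv(F₀) ∪ F₁`. -/
def Drel {A : Type*} (C : A → A → Prop) (f : A → A → Bool) (a b : A) : Prop :=
  inF0 C f b a ∨ inF1 C f a b

/-- The relation `F₁ \ conv(F₀)`. -/
def Erel {A : Type*} (C : A → A → Prop) (f : A → A → Bool) (a b : A) : Prop :=
  inF1 C f a b ∧ ¬ inF0 C f b a

/-- `f` is a preference function over `(A, C)`: every directed cycle of
`conv(F₀) ∪ F₁` is entirely contained in `F₁ \ conv(F₀)`.  Equivalently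
(edge-wise): every edge of `conv(F₀) ∪ F₁` lying on a directed cycle
(i.e. admitting a return path) belongs to `F₁ \ conv(F₀)`. -/
def IsPrefFun {A : Type*} (C : A → A → Prop) (f : A → A → Bool) : Prop :=
  ∀ a b, Drel C f a b → Relation.ReflTransGen (Drel C f) b a → Erel C f a b

/-- A ranking function for `(F, l)` (assuming no argument is labelled `out`):
(1) every attack touching an `in`-labelled argument strictly decreases rank, and
(2) every `undec` argument has an `undec` attacker of rank at most its own. -/
def IsRanking {A : Type*} (C : A → A → Prop) (l : A → Label) (ψ : A → ℤ) : Prop :=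
  (∀ u v, C u v → (l u = Label.inn ∨ l v = Label.inn) → ψ u > ψ v) ∧
  (∀ u, l u = Label.undec → ∃ v, C v u ∧ l v = Label.undec ∧ ψ v ≤ ψ u)
/-- replacing a witnessing preference function `g` by `g_f`
(which assigns 1 exactly to attacks targeting `out`-labelled arguments among
attacks touching `out`-labelled arguments) preserves being a preference
function and the completeness of `l` on the associated fPSG. -/
theorem stmt9 {A : Type*} [Fintype A] (C : A → A → Prop) (l : A → Label)
    (hout : ∀ a, l a = Label.out → ∃ b, C b a ∧ l b = Label.inn)
    (g : A → A → Bool) (hg : IsPrefFun C g)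
    (hcomp : CompleteLabelling (inF1 C g) l) :
    IsPrefFun C (fun u v =>
      if l u ≠ Label.out ∧ l v ≠ Label.out then g u v
      else decide (l v = Label.out)) ∧
    CompleteLabelling (inF1 C (fun u v =>
      if l u ≠ Label.out ∧ l v ≠ Label.out then g u v
      else decide (l v = Label.out))) l := by

  set gf : A → A → Bool := fun u v =>
      if l u ≠ Label.out ∧ l v ≠ Label.out then g u v
      else decide (l v = Label.out) with hgfdef
  have hval_tgt : ∀ u v, l v = Label.out → gf u v = true := by
    intro u v hv
    simp [hgfdef, hv]
  have hval_src : ∀ u v, l u = Label.out → l v ≠ Label.out → gf u v = false := by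
    intro u v hu hv
    simp [hgfdef, hu, hv]
  have hval_non : ∀ u v, l u ≠ Label.out → l v ≠ Label.out → gf u v = g u v := by
    intro u v hu hv
    simp [hgfdef, hu, hv]
  -- an edge of Drel gf leaving an out-node goes to an out-node
  have lemma0 : ∀ x y, Drel C gf x y → l x = Label.out → l y = Label.out := by
    intro x y hD hx
    rcases hD with ⟨hC, hf⟩ | ⟨hC, hf⟩
    · rw [hval_tgt y x hx] at hf; exact absurd hf (by simp)
    · by_contra hy
      rw [hval_src x y hx hy] at hf
      exact absurd hf (by simp)
  have lemma1 : ∀ x y, Relation.ReflTransGen (Drel C gf) x y → l x = Label.out →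
      l y = Label.out := by
    intro x y h hx
    induction h with
    | refl => exact hx
    | tail h1 h2 ih => exact lemma0 _ _ h2 ih
  -- between non-out nodes, Drel gf and Drel g coincide
  have hDrel : ∀ a b, l a ≠ Label.out → l b ≠ Label.out →
      (Drel C gf a b ↔ Drel C g a b) := by
    intro a b ha hb
    unfold Drel inF0 inF1
    rw [hval_non b a hb ha, hval_non a b ha hb]
  have lemma2 : ∀ x y, Relation.ReflTransGen (Drel C gf) x y → l y ≠ Label.out →
      Relation.ReflTransGen (Drel C g) x y ∧ l x ≠ Label.out := by
    intro x y h hy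
    induction h with
    | refl => exact ⟨Relation.ReflTransGen.refl, hy⟩
    | @tail b c h1 h2 ih =>
      have hb : l b ≠ Label.out := by
        intro hb
        exact hy (lemma0 _ _ h2 hb)
      obtain ⟨hpath, hx⟩ := ih hb
      exact ⟨hpath.tail ((hDrel b c hb hy).mp h2), hx⟩
  constructor
  · -- IsPrefFun
    intro a b hD hR
    by_cases hb : l b = Label.out
    · by_cases ha : l a = Label.out
      · -- both out: edge is in F1 and converse not in F0
        have hC : C a b := by
          rcases hD with ⟨hC, hf⟩ | ⟨hC, hf⟩
          · rw [hval_tgt b a ha] at hf; exact absurd hf (by simp)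
          · exact hC
        refine ⟨⟨hC, hval_tgt a b hb⟩, ?_⟩
        rintro ⟨hC', hf'⟩
        rw [hval_tgt b a ha] at hf'
        exact absurd hf' (by simp)
      · exact absurd (lemma1 _ _ hR hb) ha
    · have ha : l a ≠ Label.out := by
        intro ha
        exact hb (lemma0 _ _ hD ha)
      obtain ⟨hpath, _⟩ := lemma2 b a hR ha
      obtain ⟨⟨hC1, hg1⟩, hn0⟩ := hg a b ((hDrel a b ha hb).mp hD) hpath
      refine ⟨⟨hC1, by rw [hval_non a b ha hb]; exact hg1⟩, ?_⟩
      rintro ⟨hC', hf'⟩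
      rw [hval_non b a hb ha] at hf'
      exact hn0 ⟨hC', hf'⟩
  · -- CompleteLabelling
    intro a
    constructor
    · constructor
      · rintro hin b ⟨hC, hf⟩
        have ha : l a ≠ Label.out := by rw [hin]; simp
        by_cases hb : l b = Label.out
        · exact hb
        · rw [hval_non b a hb ha] at hf
          exact (hcomp a).1.mp hin b ⟨hC, hf⟩
      · intro h
        have ha : l a ≠ Label.out := by
          intro ha
          obtain ⟨b, hC, hbin⟩ := hout a ha
          have := h b ⟨hC, hval_tgt b a ha⟩
          rw [hbin] at this; exact absurd this (by simp)
        apply (hcomp a).1.mpr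
        rintro b ⟨hC, hgb⟩
        by_cases hb : l b = Label.out
        · exact hb
        · exact h b ⟨hC, by rw [hval_non b a hb ha]; exact hgb⟩
    · constructor
      · intro ha
        obtain ⟨b, hC, hbin⟩ := hout a ha
        exact ⟨b, ⟨hC, hval_tgt b a ha⟩, hbin⟩
      · rintro ⟨b, ⟨hC, hf⟩, hbin⟩
        by_cases ha : l a = Label.out
        · exact ha
        · have hb : l b ≠ Label.out := by rw [hbin]; simp
          rw [hval_non b a hb ha] at hf
          exact (hcomp a).2.mpr ⟨b, ⟨hC, hf⟩, hbin⟩
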